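/- Let N ≥ 1, n, k, l ∈ ℤ, a ∈ ℂ with a ≠ 0, and set b = −1/a. Let p_1,…,p_N ∈ ℂ with p_i ∉ {0, a, −1/a}, set p̄_j = 1/p_j for each j (so p̄_j ∉ {0, −a, 1/a}), assume p_i + p̄_j ≠ 0 for all i,j, and let ξ_{i0}, ξ̄_{j0} ∈ ℂ. Then the Gram-type tau functions satisfy the three reduction conditions: (i) ∂_{x_1} τ_{nkl} = ∂_{x_{-1}} τ_{nkl}, (ii) −a² ∂_{t_a} τ_{nkl} = ∂_{t_b} τ_{nkl}, and (iii) τ_{n-1, k+1, l+1} = τ_{nkl}, identically in (x_1, x_{-1}, t_a, t_b). -/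

import Mathlib

/-!
Under `p̄_j = 1/p_j`, `b = -1/a` there are gauge terms `g_i`, linear in `x_{-1}` and `t_a`, such
that `ξ_i - g_i` and `ξ̄_i + g_i` depend on the variables only through `z = x_1 + x_{-1}` and
`t = t_b - t_a / a²`. Replacing `φ_i, ψ_i` by `e^{-g_i} φ_i, e^{g_i} ψ_i` conjugates the Gram matrix
by a diagonal matrix, so `τ` is a function of `(z, t)` alone, holomorphic in `t`, and (i), (ii)
follow from the chain rule. Likewise `(n, k, l) ↦ (n - 1, k + 1, l + 1)` multiplies `φ_i` by
`c_i = (p_i - a)(p_i - b)/p_i` and `ψ_i` by `c_i⁻¹`, which gives (iii).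
-/

noncomputable section

/-- The phase `ξ_i = x_{-1}/p_i + p_i x_1 + t_a/(p_i − a) + t_b/(p_i − b) + ξ_{i0}`. -/
def xiph {N : ℕ} (p : Fin N → ℂ) (a b : ℂ) (xi0 : Fin N → ℂ) (i : Fin N)
    (x1 xm1 ta tb : ℝ) : ℂ :=
  (xm1 : ℂ) / p i + p i * (x1 : ℂ) + (ta : ℂ) / (p i - a) + (tb : ℂ) / (p i - b) + xi0 i

/-- The phase `ξ̄_j = x_{-1}/p̄_j + p̄_j x_1 + t_a/(p̄_j + a) + t_b/(p̄_j + b) + ξ̄_{j0}`. -/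
def xibph {N : ℕ} (pb : Fin N → ℂ) (a b : ℂ) (xib0 : Fin N → ℂ) (j : Fin N)
    (x1 xm1 ta tb : ℝ) : ℂ :=
  (xm1 : ℂ) / pb j + pb j * (x1 : ℂ) + (ta : ℂ) / (pb j + a) + (tb : ℂ) / (pb j + b) + xib0 j

/-- `φ_i^{nkl} = p_i^n (p_i − a)^k (p_i − b)^l e^{ξ_i}`. -/
def phifn {N : ℕ} (p : Fin N → ℂ) (a b : ℂ) (xi0 : Fin N → ℂ) (n k l : ℤ) (i : Fin N)
    (x1 xm1 ta tb : ℝ) : ℂ :=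
  p i ^ n * (p i - a) ^ k * (p i - b) ^ l * Complex.exp (xiph p a b xi0 i x1 xm1 ta tb)

/-- `ψ_j^{nkl} = (−1/p̄_j)^n (−1/(p̄_j + a))^k (−1/(p̄_j + b))^l e^{ξ̄_j}`. -/
def psifn {N : ℕ} (pb : Fin N → ℂ) (a b : ℂ) (xib0 : Fin N → ℂ) (n k l : ℤ) (j : Fin N)
    (x1 xm1 ta tb : ℝ) : ℂ :=
  (-1 / pb j) ^ n * (-1 / (pb j + a)) ^ k * (-1 / (pb j + b)) ^ l *
    Complex.exp (xibph pb a b xib0 j x1 xm1 ta tb)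

/-- The Gram-type tau function `τ_{nkl} = det(δ_{ij} + φ_i ψ_j/(p_i + p̄_j))`. -/
def tauf {N : ℕ} (p pb : Fin N → ℂ) (a b : ℂ) (xi0 xib0 : Fin N → ℂ) (n k l : ℤ)
    (x1 xm1 ta tb : ℝ) : ℂ :=
  Matrix.det (Matrix.of fun i j : Fin N =>
    (if i = j then (1 : ℂ) else 0) +
      phifn p a b xi0 n k l i x1 xm1 ta tb * psifn pb a b xib0 n k l j x1 xm1 ta tb
        / (p i + pb j))

open Matrix

section Gram

variable {K ι : Type*} [Field K] [Fintype ι] [DecidableEq ι]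

theorem Matrix.det_diagonal_conj (d : ι → K) (hd : ∀ i, d i ≠ 0) (M : Matrix ι ι K) :
    (of fun i j => d i * M i j * (d j)⁻¹).det = M.det := by
  have hinv : diagonal d * diagonal (fun i => (d i)⁻¹) = 1 := by
    rw [diagonal_mul_diagonal, ← diagonal_one]
    exact congrArg diagonal (funext fun i => mul_inv_cancel₀ (hd i))
  have hinv' : diagonal (fun i => (d i)⁻¹) * diagonal d = 1 := by
    rw [diagonal_mul_diagonal, ← diagonal_one]
    exact congrArg diagonal (funext fun i => inv_mul_cancel₀ (hd i))
  rw [← det_conj_of_mul_eq_one (N := M) hinv hinv']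
  congr 1
  ext i j
  simp [diagonal_mul, mul_diagonal]

def gramMatrix (p pb φ ψ : ι → K) : Matrix ι ι K :=
  of fun i j => (if i = j then 1 else 0) + φ i * ψ j / (p i + pb j)

theorem det_gramMatrix_of_gauge (p pb φ ψ φ' ψ' d : ι → K) (hd : ∀ i, d i ≠ 0)
    (hφ : ∀ i, φ' i = d i * φ i) (hψ : ∀ j, ψ' j = (d j)⁻¹ * ψ j) :
    (gramMatrix p pb φ' ψ').det = (gramMatrix p pb φ ψ).det := by
  rw [← det_diagonal_conj d hd (gramMatrix p pb φ ψ)]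
  congr 1
  ext i j
  simp only [gramMatrix, of_apply, hφ, hψ]
  split_ifs with h
  · subst h
    field_simp [hd i]
  · field_simp [hd j]
    ring

end Gram

theorem differentiable_det_gramMatrix {𝕜 E ι : Type*} [NontriviallyNormedField 𝕜]
    [NormedAddCommGroup E] [NormedSpace 𝕜 E] [Fintype ι] [DecidableEq ι]
    (p pb : ι → 𝕜) {φ ψ : E → ι → 𝕜}
    (hφ : ∀ i, Differentiable 𝕜 fun x => φ x i) (hψ : ∀ j, Differentiable 𝕜 fun x => ψ x j) :
    Differentiable 𝕜 fun x => (gramMatrix p pb (φ x) (ψ x)).det := by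
  simp only [det_apply', gramMatrix, of_apply]
  fun_prop

theorem deriv_ofReal_comp {G f : ℂ → ℂ} {f' : ℂ} {x : ℝ} (hG : DifferentiableAt ℂ G (f x))
    (hf : HasDerivAt f f' x) : deriv (fun y : ℝ => G (f y)) x = deriv G (f x) * f' :=
  (hG.hasDerivAt.comp (x : ℂ) hf).comp_ofReal.deriv

theorem phifn_index_shift {N : ℕ} (p : Fin N → ℂ) (a b : ℂ) (xi0 : Fin N → ℂ) (n k l : ℤ)
    {i : Fin N} (hp0 : p i ≠ 0) (hpa : p i - a ≠ 0) (hpb : p i - b ≠ 0) (x1 xm1 ta tb : ℝ) :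
    phifn p a b xi0 (n - 1) (k + 1) (l + 1) i x1 xm1 ta tb
      = (p i - a) * (p i - b) / p i * phifn p a b xi0 n k l i x1 xm1 ta tb := by
  simp only [phifn, zpow_sub_one₀ hp0, zpow_add_one₀ hpa, zpow_add_one₀ hpb]
  ring

theorem psifn_index_shift {N : ℕ} (pb : Fin N → ℂ) (a b : ℂ) (xib0 : Fin N → ℂ) (n k l : ℤ)
    {j : Fin N} (hp0 : pb j ≠ 0) (hpa : pb j + a ≠ 0) (hpb : pb j + b ≠ 0) (x1 xm1 ta tb : ℝ) :
    psifn pb a b xib0 (n - 1) (k + 1) (l + 1) j x1 xm1 ta tb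
      = -pb j / ((pb j + a) * (pb j + b)) * psifn pb a b xib0 n k l j x1 xm1 ta tb := by
  have h0 : -1 / pb j ≠ 0 := div_ne_zero (neg_ne_zero.mpr one_ne_zero) hp0
  have ha : -1 / (pb j + a) ≠ 0 := div_ne_zero (neg_ne_zero.mpr one_ne_zero) hpa
  have hb : -1 / (pb j + b) ≠ 0 := div_ne_zero (neg_ne_zero.mpr one_ne_zero) hpb
  simp only [psifn, zpow_sub_one₀ h0, zpow_add_one₀ ha, zpow_add_one₀ hb]
  field_simp

section ReducedDenominators

variable {K : Type*} [Field K] {a p : K}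

theorem sub_neg_one_div_eq (ha : a ≠ 0) : p - -1 / a = (1 + p * a) / a := by
  field_simp
  ring

theorem one_div_add_eq (hp : p ≠ 0) : 1 / p + a = (1 + p * a) / p := by
  field_simp

theorem one_div_add_neg_one_div_eq (ha : a ≠ 0) (hp : p ≠ 0) :
    1 / p + -1 / a = (a - p) / (p * a) := by
  field_simp
  ring

theorem one_add_mul_ne_zero_of_ne_neg_one_div (ha : a ≠ 0) (hp : p ≠ -1 / a) : 1 + p * a ≠ 0 := by
  have h := sub_ne_zero.mpr hp
  rw [sub_neg_one_div_eq ha] at h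
  exact (div_ne_zero_iff.mp h).1

end ReducedDenominators

section Reduction

variable {N : ℕ} (p : Fin N → ℂ) (a : ℂ) (xi0 xib0 : Fin N → ℂ) (n k l : ℤ)

/-- `φ_i` and `ψ_j` with the gauge factors removed, as functions of `z = x_1 + x_{-1}` and
`t = t_b - t_a / a²`. -/
def reducedPhi (z t : ℂ) (i : Fin N) : ℂ :=
  p i ^ n * (p i - a) ^ k * (p i - -1 / a) ^ l *
    Complex.exp (p i * z + t / (p i - -1 / a) + xi0 i)

def reducedPsi (z t : ℂ) (j : Fin N) : ℂ :=
  (-1 / (1 / p j)) ^ n * (-1 / (1 / p j + a)) ^ k * (-1 / (1 / p j + -1 / a)) ^ l *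
    Complex.exp (1 / p j * z + t / (1 / p j + -1 / a) + xib0 j)

def reducedTau (z t : ℂ) : ℂ :=
  (gramMatrix p (fun j => 1 / p j) (reducedPhi p a xi0 n k l z t)
    (reducedPsi p a xib0 n k l z t)).det

theorem differentiable_reducedTau (z : ℂ) :
    Differentiable ℂ (reducedTau p a xi0 xib0 n k l z) :=
  differentiable_det_gramMatrix _ _ (fun i => by unfold reducedPhi; fun_prop)
    (fun j => by unfold reducedPsi; fun_prop)

variable {p a}

theorem tauf_eq_reducedTau (ha : a ≠ 0) (hp : ∀ i, p i ≠ 0 ∧ p i ≠ a ∧ p i ≠ -1 / a)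
    (x1 xm1 ta tb : ℝ) :
    tauf p (fun j => 1 / p j) a (-1 / a) xi0 xib0 n k l x1 xm1 ta tb
      = reducedTau p a xi0 xib0 n k l (x1 + xm1) (tb - ta / a ^ 2) := by
  set gauge : Fin N → ℂ := fun i =>
    xm1 * (1 / p i - p i) + ta / (p i - a) + ta / a ^ 2 / (p i - -1 / a)
  refine det_gramMatrix_of_gauge _ _ _ _ _ _ (fun i => Complex.exp (gauge i))
    (fun i => Complex.exp_ne_zero _) (fun i => ?_) (fun j => ?_)
  · have hexp : xiph p a (-1 / a) xi0 i x1 xm1 ta tb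
        = gauge i + (p i * (x1 + xm1) + (tb - ta / a ^ 2) / (p i - -1 / a) + xi0 i) := by
      simp only [xiph, gauge]
      ring
    simp only [phifn, reducedPhi, hexp, Complex.exp_add]
    ring
  · obtain ⟨hp0, hpa, hpb⟩ := hp j
    have hap : a - p j ≠ 0 := sub_ne_zero.mpr hpa.symm
    have hpb' : 1 + p j * a ≠ 0 := one_add_mul_ne_zero_of_ne_neg_one_div ha hpb
    -- the `t_a`-coefficients of `ξ̄_j` and `ξ_j`, once `t_b` is traded for `t`, are opposite
    have hta : 1 / (1 / p j + a) + 1 / a ^ 2 / (1 / p j + -1 / a)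
        = -(1 / (p j - a) + 1 / a ^ 2 / (p j - -1 / a)) := by
      rw [sub_neg_one_div_eq ha, one_div_add_eq hp0, one_div_add_neg_one_div_eq ha hp0,
        ← neg_sub a]
      field_simp
      ring
    have hexp : xibph (fun j => 1 / p j) a (-1 / a) xib0 j x1 xm1 ta tb
        = -gauge j + (1 / p j * (x1 + xm1) + (tb - ta / a ^ 2) / (1 / p j + -1 / a) + xib0 j) := by
      simp only [xibph, gauge, div_div_eq_mul_div, div_one]
      linear_combination (ta : ℂ) * hta
    simp only [psifn, reducedPsi, hexp, Complex.exp_add, Complex.exp_neg]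
    ring

theorem tauf_index_shift (ha : a ≠ 0) (hp : ∀ i, p i ≠ 0 ∧ p i ≠ a ∧ p i ≠ -1 / a)
    (x1 xm1 ta tb : ℝ) :
    tauf p (fun j => 1 / p j) a (-1 / a) xi0 xib0 (n - 1) (k + 1) (l + 1) x1 xm1 ta tb
      = tauf p (fun j => 1 / p j) a (-1 / a) xi0 xib0 n k l x1 xm1 ta tb := by
  have hpa i : p i - a ≠ 0 := sub_ne_zero.mpr (hp i).2.1
  have hpb i : p i - -1 / a ≠ 0 := sub_ne_zero.mpr (hp i).2.2
  refine det_gramMatrix_of_gauge _ _ _ _ _ _ (fun i => (p i - a) * (p i - -1 / a) / p i)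
    (fun i => div_ne_zero (mul_ne_zero (hpa i) (hpb i)) (hp i).1)
    (fun i => phifn_index_shift p a _ xi0 n k l (hp i).1 (hpa i) (hpb i) x1 xm1 ta tb)
    (fun j => ?_)
  have hp0 : p j ≠ 0 := (hp j).1
  have hap : a - p j ≠ 0 := sub_ne_zero.mpr (hp j).2.1.symm
  have hpb' : 1 + p j * a ≠ 0 := one_add_mul_ne_zero_of_ne_neg_one_div ha (hp j).2.2
  rw [psifn_index_shift _ a _ xib0 n k l (one_div_ne_zero hp0)
    (by rw [one_div_add_eq hp0]; exact div_ne_zero hpb' hp0)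
    (by rw [one_div_add_neg_one_div_eq ha hp0]; exact div_ne_zero hap (mul_ne_zero hp0 ha))]
  congr 1
  rw [sub_neg_one_div_eq ha, one_div_add_eq hp0, one_div_add_neg_one_div_eq ha hp0, ← neg_sub a]
  field_simp

end Reduction

theorem kp_reduction_conditions_general (N : ℕ) (n k l : ℤ)
    (a : ℂ) (ha : a ≠ 0)
    (p : Fin N → ℂ) (xi0 xib0 : Fin N → ℂ)
    (hp : ∀ i : Fin N, p i ≠ 0 ∧ p i ≠ a ∧ p i ≠ -1 / a) :
    ∀ x1 xm1 ta tb : ℝ,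
      (deriv (fun u => tauf p (fun j => 1 / p j) a (-1 / a) xi0 xib0 n k l u xm1 ta tb) x1
          = deriv (fun v => tauf p (fun j => 1 / p j) a (-1 / a) xi0 xib0 n k l x1 v ta tb) xm1)
        ∧ (-a ^ 2 *
              deriv (fun w => tauf p (fun j => 1 / p j) a (-1 / a) xi0 xib0 n k l x1 xm1 w tb) ta
            = deriv (fun w => tauf p (fun j => 1 / p j) a (-1 / a) xi0 xib0 n k l x1 xm1 ta w) tb)
        ∧ tauf p (fun j => 1 / p j) a (-1 / a) xi0 xib0 (n - 1) (k + 1) (l + 1) x1 xm1 ta tb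
            = tauf p (fun j => 1 / p j) a (-1 / a) xi0 xib0 n k l x1 xm1 ta tb := by
  intro x1 xm1 ta tb
  refine ⟨?_, ?_, tauf_index_shift xi0 xib0 n k l ha hp x1 xm1 ta tb⟩ <;>
    simp only [tauf_eq_reducedTau xi0 xib0 n k l ha hp]
  · set g : ℝ → ℂ := fun r => reducedTau p a xi0 xib0 n k l r (tb - ta / a ^ 2)
    simp only [← Complex.ofReal_add]
    exact (deriv_comp_add_const g xm1 x1).trans (deriv_comp_const_add g x1 xm1).symm
  · have hτ := differentiable_reducedTau p a xi0 xib0 n k l (x1 + xm1)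
    rw [deriv_ofReal_comp (f := fun w => (tb : ℂ) - w / a ^ 2) (hτ _)
        (((hasDerivAt_id (ta : ℂ)).div_const _).const_sub _),
      deriv_ofReal_comp (f := fun w => w - (ta : ℂ) / a ^ 2) (hτ _)
        ((hasDerivAt_id (tb : ℂ)).sub_const _)]
    field_simp

/-- under the reduction `p̄_j = 1/p_j`, `b = −1/a`, the Gram-type tau
functions satisfy `∂_{x_1} τ_{nkl} = ∂_{x_{-1}} τ_{nkl}`, `−a² ∂_{t_a} τ_{nkl} = ∂_{t_b} τ_{nkl}`
and `τ_{n-1,k+1,l+1} = τ_{nkl}`. -/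
theorem kp_reduction_conditions (N : ℕ) (hN : 1 ≤ N) (n k l : ℤ)
    (a : ℂ) (ha : a ≠ 0)
    (p : Fin N → ℂ) (xi0 xib0 : Fin N → ℂ)
    (hp : ∀ i : Fin N, p i ≠ 0 ∧ p i ≠ a ∧ p i ≠ -1 / a)
    (hsum : ∀ i j : Fin N, p i + 1 / p j ≠ 0) :
    ∀ x1 xm1 ta tb : ℝ,
      (deriv (fun u => tauf p (fun j => 1 / p j) a (-1 / a) xi0 xib0 n k l u xm1 ta tb) x1
          = deriv (fun v => tauf p (fun j => 1 / p j) a (-1 / a) xi0 xib0 n k l x1 v ta tb) xm1)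
        ∧ (-a ^ 2 *
              deriv (fun w => tauf p (fun j => 1 / p j) a (-1 / a) xi0 xib0 n k l x1 xm1 w tb) ta
            = deriv (fun w => tauf p (fun j => 1 / p j) a (-1 / a) xi0 xib0 n k l x1 xm1 ta w) tb)
        ∧ tauf p (fun j => 1 / p j) a (-1 / a) xi0 xib0 (n - 1) (k + 1) (l + 1) x1 xm1 ta tb
            = tauf p (fun j => 1 / p j) a (-1 / a) xi0 xib0 n k l x1 xm1 ta tb :=
  kp_reduction_conditions_general N n k l a ha p xi0 xib0 hp
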